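/- If g: ℕ → (0,∞) is arithmetically convergent in the geometric sense, then f = Mg defined by f(m) = ∏_{k|m} e^{μ(m/k)·ln g(k)} is arithmetically summable in the geometric sense (with the same witness n), where μ is the classical Möbius function. -/
import Mathlib

lemma key_log (g : ℕ → ℝ) (hgpos : ∀ k, 0 < g k) :
    ∀ m, 0 < m →
      ∑ k ∈ Nat.divisors m, ∑ j ∈ Nat.divisors k,
        (((ArithmeticFunction.moebius (k / j) : ℤ) : ℝ) * Real.log (g j))
      = Real.log (g m) := by
  have h := (ArithmeticFunction.sum_eq_iff_sum_smul_moebius_eq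
    (R := ℝ) (f := fun k => ∑ j ∈ Nat.divisors k,
      (((ArithmeticFunction.moebius (k / j) : ℤ) : ℝ) * Real.log (g j)))
    (g := fun m => Real.log (g m))).mpr
  exact fun m hm => h (fun n hn => by
    rw [Nat.sum_divisorsAntidiagonal' (f := fun i j =>
      (ArithmeticFunction.moebius i : ℤ) • Real.log (g j))]
    simp [zsmul_eq_mul]) m hm

/-- if g ∈ AC(G) with witness n, then f = Mg defined by
f(m) = ∏_{k|m} e^{μ(m/k)·ln g(k)} is in AS(G) with the same witness n. -/
theorem acg_gives_asg (g : ℕ → ℝ) (hgpos : ∀ k, 0 < g k) (n : ℕ) (hn : 0 < n)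
    (hg : ∀ m, 0 < m → g m = g (Nat.gcd m n)) :
    ∀ m, 0 < m →
      ∏ k ∈ Nat.divisors m,
        (fun i => ∏ j ∈ Nat.divisors i,
          Real.exp (((ArithmeticFunction.moebius (i / j) : ℤ) : ℝ) * Real.log (g j))) k
      = ∏ k ∈ Nat.divisors (Nat.gcd m n),
        (fun i => ∏ j ∈ Nat.divisors i,
          Real.exp (((ArithmeticFunction.moebius (i / j) : ℤ) : ℝ) * Real.log (g j))) k := by
  intro m hm
  have hgcd : 0 < Nat.gcd m n := Nat.gcd_pos_of_pos_left n hm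
  have h1 : ∀ p, 0 < p →
      ∏ k ∈ Nat.divisors p, ∏ j ∈ Nat.divisors k,
        Real.exp (((ArithmeticFunction.moebius (k / j) : ℤ) : ℝ) * Real.log (g j)) = g p := by
    intro p hp
    rw [Finset.prod_congr rfl (fun k _ => (Real.exp_sum _ _).symm), ← Real.exp_sum,
      key_log g hgpos p hp, Real.exp_log (hgpos p)]
  simp only []
  rw [h1 m hm, h1 _ hgcd, hg m hm]
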